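/- arXiv:1507.06523 — 3 statements merged into one kernel-verified Lean document; each statement's English description precedes it below -/
import Mathlib

section
/- If an irrational number α ∈ (0,1) satisfies condition (A1), then α is not a Liouville number. -/
/-- Condition (A1): there exist `N₀, N₁ > 0` such that for all integers `n₁, n₂, n₃` with
`|n₁| + |n₂| + |n₃| > N₁`, either `n₁ + α n₂ + α² n₃ = 0` or
`|n₁ + α n₂ + α² n₃| > (|n₁| + |n₂| + |n₃|)^(-N₀)`. -/
def CondA1 (α : ℝ) : Prop :=
  ∃ N₀ N₁ : ℝ, 0 < N₀ ∧ 0 < N₁ ∧ ∀ n₁ n₂ n₃ : ℤ,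
    N₁ < ((|n₁| + |n₂| + |n₃| : ℤ) : ℝ) →
    ((n₁ : ℝ) + α * n₂ + α ^ 2 * n₃ = 0 ∨
      (((|n₁| + |n₂| + |n₃| : ℤ) : ℝ)) ^ (-N₀) < |(n₁ : ℝ) + α * n₂ + α ^ 2 * n₃|)

/-!
Taking `n₃ = 0` in (A1) bounds `|n α - m|` from below by `(|m| + n)^(-N₀)`. When `m / n` is
within `1` of `α` and `n` is large, `|m| + n ≤ (|α| + 2) n ≤ n²`, so `|α - m / n| > n^(-2N₀-1)`.
Hence `α` is not Liouville with exponent `2N₀ + 2`, let alone Liouville.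
-/

open Filter

theorem CondA1.exists_rpow_lt_abs_mul_sub {α : ℝ} (h : CondA1 α) :
    ∃ N₀ N₁ : ℝ, 0 < N₀ ∧ ∀ (m : ℤ) (n : ℕ), N₁ < |(m : ℝ)| + n → α * n ≠ m →
      (|(m : ℝ)| + n) ^ (-N₀) < |α * n - m| := by
  obtain ⟨N₀, N₁, hN₀, -, hA⟩ := h
  refine ⟨N₀, N₁, hN₀, fun m n hN₁ hne => ?_⟩
  have hsum : ((|-m| + |(n : ℤ)| + |0| : ℤ) : ℝ) = |(m : ℝ)| + n := by push_cast; simp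
  have hform : ((-m : ℤ) : ℝ) + α * ((n : ℤ) : ℝ) + α ^ 2 * ((0 : ℤ) : ℝ) = α * n - m := by
    push_cast; ring
  have := hA (-m) n 0
  rw [hsum, hform] at this
  exact (this hN₁).resolve_left (sub_ne_zero.2 hne)

theorem abs_add_le_of_abs_sub_div_lt_one {x m q : ℝ} (hq : 0 < q) (h : |x - m / q| < 1) :
    |m| + q ≤ (|x| + 2) * q := by
  have hmq : |m / q| ≤ |x| + 1 := by
    have := abs_sub_abs_le_abs_sub (m / q) x
    rw [abs_sub_comm] at this
    linarith
  rw [abs_div, abs_of_pos hq, div_le_iff₀ hq] at hmq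
  linarith

theorem CondA1.exists_not_liouvilleWith {α : ℝ} (h : CondA1 α) : ∃ p, ¬ LiouvilleWith p α := by
  obtain ⟨N₀, N₁, hN₀, hA⟩ := h.exists_rpow_lt_abs_mul_sub
  refine ⟨2 * N₀ + 2, fun hL => ?_⟩
  have hq : 2 * N₀ + 1 < 2 * N₀ + 2 := by linarith
  obtain ⟨n, ⟨m, hne, hlt⟩, hn⟩ := ((hL.frequently_lt_rpow_neg hq).and_eventually
    (eventually_gt_atTop ⌈max N₁ (|α| + 2)⌉₊)).exists
  replace hn : max N₁ (|α| + 2) < n := Nat.lt_of_ceil_lt hn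
  have hn1 : (1 : ℝ) ≤ n := by linarith [le_max_right N₁ (|α| + 2), abs_nonneg α]
  have hn0 : (0 : ℝ) < n := by linarith
  have hsum : |(m : ℝ)| + n ≤ (n : ℝ) ^ 2 := by
    have hclose : |α - m / n| < 1 :=
      hlt.trans_le (Real.rpow_le_one_of_one_le_of_nonpos hn1 (by linarith))
    calc |(m : ℝ)| + n ≤ (|α| + 2) * n := abs_add_le_of_abs_sub_div_lt_one hn0 hclose
      _ ≤ (n : ℝ) ^ 2 := by nlinarith [le_max_right N₁ (|α| + 2)]
  have hlower : (n : ℝ) ^ (-(2 * N₀)) < |α * n - m| := calc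
    (n : ℝ) ^ (-(2 * N₀)) = ((n : ℝ) ^ 2) ^ (-N₀) := by
      rw [← Real.rpow_natCast_mul hn0.le]; push_cast; ring_nf
    _ ≤ (|(m : ℝ)| + n) ^ (-N₀) :=
      Real.rpow_le_rpow_of_nonpos (by positivity) hsum (by linarith)
    _ < |α * n - m| :=
      hA m n (by linarith [le_max_left N₁ (|α| + 2), abs_nonneg (m : ℝ)])
        fun h => hne (by field_simp; linarith)
  have hupper : |α * n - m| < (n : ℝ) ^ (-(2 * N₀)) := calc
    |α * n - m| = n * |α - m / n| := by
      rw [← abs_of_pos hn0, ← abs_mul, abs_of_pos hn0]; congr 1; field_simp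
    _ < n * (n : ℝ) ^ (-(2 * N₀ + 1)) := by gcongr
    _ = (n : ℝ) ^ (-(2 * N₀)) := by
      rw [← Real.rpow_one_add' hn0.le (by linarith)]; ring_nf
  exact hlower.not_gt hupper

theorem stmt_2_general (α : ℝ) (hA1 : CondA1 α) : ¬ Liouville α := fun hL =>
  hA1.exists_not_liouvilleWith.elim fun p hp => hp (hL.liouvilleWith p)

/-- If an irrational number `α ∈ (0,1)` satisfies condition (A1), then `α` is not a
Liouville number. -/
theorem stmt_2 (α : ℝ) (hα : α ∈ Set.Ioo (0 : ℝ) 1) (hirr : Irrational α)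
    (hA1 : CondA1 α) : ¬ Liouville α :=
  stmt_2_general α hA1
end

section
/- Let d₁, d₂ > 0 and p_r := 2π(r₁/d₁, r₂/d₂) for r ∈ ℤ². Let R₀, W₀ > 0 and w : ℤ² → ℂ with w_q = 0 whenever |p_q| ≥ R₀ and Σ_q |w_q| ≤ W₀. Fix j ∈ ℕ. Suppose k ∈ ℝ² with |k| ≥ max(2, 4 j R₀), λ ∈ ℝ with |λ − |k|²| ≤ 1, and C : ℤ² → ℂ satisfies Σ_r |C_r| ≤ 2 together with the recursion (λ − |k+p_r|²) C_r = Σ_{q∈ℤ²} w_q C_{r−q} for all r ∈ ℤ². Then there is a constant c(j, W₀), depending only on j and W₀, such that Σ_{r : |k+p_r| < |k|/4} |C_r| ≤ c(j, W₀) |k|^{−j}. -/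
open MeasureTheory

/-- The dual lattice vectors `p_r = 2π (r₁/d₁, r₂/d₂)`. -/
noncomputable def dualVec (d₁ d₂ : ℝ) (r : ℤ × ℤ) : EuclideanSpace ℝ (Fin 2) :=
  EuclideanSpace.single 0 (2 * Real.pi * (r.1 : ℝ) / d₁) +
    EuclideanSpace.single 1 (2 * Real.pi * (r.2 : ℝ) / d₂)

/-!
A coefficient `C_r` with `|k + p_r| ≤ |k|/2` is far from the resonance circle
`|k + p_r|² ≈ λ ≈ |k|²`: there `|λ - |k + p_r|²| ≥ |k|²/2`, so the recursion bounds `|C_r|` by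
`2|k|⁻²` times the convolution of `|w|` with `|C|`. As `w` is supported on `|p_q| < R₀`, the mass
of `C` on the ball `|k + p_r| < ρ` is at most `2W₀|k|⁻²` times its mass on the ball of radius
`ρ + R₀`. Starting at radius `|k|/4`, the hypothesis `|k| ≥ 4jR₀` allows `j` such steps before
the radius exceeds `|k|/2`, and the total mass `Σ|C_r| ≤ 2` closes the estimate.
-/

open scoped ENNReal

lemma dualVec_sub (d₁ d₂ : ℝ) (a b : ℤ × ℤ) :
    dualVec d₁ d₂ (a - b) = dualVec d₁ d₂ a - dualVec d₁ d₂ b := by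
  ext i
  fin_cases i <;> simp [dualVec] <;> ring

lemma le_pow_mul_of_le_mul_shift {M : Type*} [Monoid M] [Preorder M] [MulLeftMono M]
    {s : ℝ → M} {a B : M} {δ L : ℝ} (hδ : 0 ≤ δ) (hB : ∀ ρ, s ρ ≤ B)
    (hstep : ∀ ρ ≤ L, s ρ ≤ a * s (ρ + δ)) :
    ∀ (n : ℕ) (ρ : ℝ), ρ + n * δ ≤ L + δ → s ρ ≤ a ^ n * B
  | 0, ρ, _ => by simpa using hB ρ
  | n + 1, ρ, hρ => by
    have hρL : ρ + n * δ ≤ L := by push_cast at hρ; linarith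
    calc s ρ ≤ a * s (ρ + δ) := hstep ρ (by nlinarith [n.cast_nonneg (α := ℝ)])
      _ ≤ a * (a ^ n * B) := mul_le_mul_right
          (le_pow_mul_of_le_mul_shift hδ hB hstep n (ρ + δ) (by linarith)) a
      _ = a ^ (n + 1) * B := by rw [pow_succ', mul_assoc]

lemma ENNReal.tsum_subtype_tsum_mul_sub_le {G : Type*} [AddGroup G] {a c : G → ℝ≥0∞}
    {S T : Set G} (hST : ∀ q, a q ≠ 0 → Set.MapsTo (· - q) S T) :
    ∑' r : S, ∑' q, a q * c (r - q) ≤ (∑' q, a q) * ∑' t : T, c t := by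
  rw [ENNReal.tsum_comm, ← ENNReal.tsum_mul_right]
  refine ENNReal.tsum_le_tsum fun q => ?_
  rw [ENNReal.tsum_mul_left]
  by_cases hq : a q = 0
  · simp [hq]
  refine mul_le_mul_right ?_ (a q)
  have hinj : Function.Injective (fun r : S => (⟨r.1 - q, hST q hq r.2⟩ : T)) :=
    fun r r' h => Subtype.ext (sub_left_injective (congrArg Subtype.val h))
  exact ENNReal.tsum_comp_le_tsum_of_injective hinj (fun t : T => c t)

lemma enorm_le_ofReal_inv_mul_of_mul_eq {𝕜 : Type*} [NormedDivisionRing 𝕜] {μ z y : 𝕜} {m : ℝ}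
    (hm : 0 < m) (hμ : m ≤ ‖μ‖) (h : μ * z = y) : ‖z‖ₑ ≤ ENNReal.ofReal m⁻¹ * ‖y‖ₑ := by
  have hz : ‖z‖ ≤ m⁻¹ * ‖y‖ := by
    rw [← h, norm_mul, ← div_eq_inv_mul, le_div_iff₀ hm, mul_comm]
    gcongr
  rw [← ofReal_norm, ← ofReal_norm, ← ENNReal.ofReal_mul (by positivity)]
  exact ENNReal.ofReal_le_ofReal hz

lemma half_sq_le_abs_sub_sq {K lam x : ℝ} (hK : 2 ≤ K) (hlam : |lam - K ^ 2| ≤ 1)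
    (hx₀ : 0 ≤ x) (hx : x ≤ K / 2) : K ^ 2 / 2 ≤ |lam - x ^ 2| := by
  have := (abs_le.mp hlam).1
  refine le_trans ?_ (le_abs_self _)
  nlinarith

-- Masses live in `ℝ≥0∞`, so that sums can be exchanged without summability bookkeeping.
noncomputable def lowModeMass (d₁ d₂ : ℝ) (k : EuclideanSpace ℝ (Fin 2)) (C : ℤ × ℤ → ℂ)
    (ρ : ℝ) : ℝ≥0∞ :=
  ∑' r : {r : ℤ × ℤ // ‖k + dualVec d₁ d₂ r‖ < ρ}, ‖C r‖ₑ

section LowModes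

variable {d₁ d₂ R₀ lam : ℝ} {k : EuclideanSpace ℝ (Fin 2)} {w C : ℤ × ℤ → ℂ}

lemma ofReal_tsum_norm_eq_lowModeMass (hC : Summable fun r => ‖C r‖) (ρ : ℝ) :
    ENNReal.ofReal (∑' r : {r : ℤ × ℤ // ‖k + dualVec d₁ d₂ r‖ < ρ}, ‖C r.1‖) =
      lowModeMass d₁ d₂ k C ρ := by
  rw [ENNReal.ofReal_tsum_of_nonneg (fun _ => norm_nonneg _) (hC.subtype _)]
  simp only [ofReal_norm, lowModeMass]

lemma lowModeMass_le_tsum (ρ : ℝ) : lowModeMass d₁ d₂ k C ρ ≤ ∑' r, ‖C r‖ₑ :=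
  ENNReal.tsum_comp_le_tsum_of_injective Subtype.val_injective _

lemma enorm_le_of_recursion (hk : 2 ≤ ‖k‖) (hlam : |lam - ‖k‖ ^ 2| ≤ 1)
    (hrec : ∀ r, ((lam - ‖k + dualVec d₁ d₂ r‖ ^ 2 : ℝ) : ℂ) * C r = ∑' q, w q * C (r - q))
    {r : ℤ × ℤ} (hr : ‖k + dualVec d₁ d₂ r‖ ≤ ‖k‖ / 2) :
    ‖C r‖ₑ ≤ ENNReal.ofReal (2 / ‖k‖ ^ 2) * ∑' q, ‖w q‖ₑ * ‖C (r - q)‖ₑ := by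
  have hgap := half_sq_le_abs_sub_sq hk hlam (norm_nonneg _) hr
  calc ‖C r‖ₑ ≤ ENNReal.ofReal (‖k‖ ^ 2 / 2)⁻¹ * ‖∑' q, w q * C (r - q)‖ₑ :=
        enorm_le_ofReal_inv_mul_of_mul_eq (by positivity)
          (by rwa [Complex.norm_real, Real.norm_eq_abs]) (hrec r)
    _ ≤ ENNReal.ofReal (2 / ‖k‖ ^ 2) * ∑' q, ‖w q‖ₑ * ‖C (r - q)‖ₑ := by
        rw [inv_div]
        gcongr
        simpa only [enorm_mul] using enorm_tsum_le_tsum_enorm (f := fun q => w q * C (r - q))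

lemma lowModeMass_le_mul (hw : ∀ q, R₀ ≤ ‖dualVec d₁ d₂ q‖ → w q = 0) (hk : 2 ≤ ‖k‖)
    (hlam : |lam - ‖k‖ ^ 2| ≤ 1)
    (hrec : ∀ r, ((lam - ‖k + dualVec d₁ d₂ r‖ ^ 2 : ℝ) : ℂ) * C r = ∑' q, w q * C (r - q))
    {ρ : ℝ} (hρ : ρ ≤ ‖k‖ / 2) :
    lowModeMass d₁ d₂ k C ρ ≤
      ENNReal.ofReal (2 / ‖k‖ ^ 2) * (∑' q, ‖w q‖ₑ) * lowModeMass d₁ d₂ k C (ρ + R₀) := by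
  have hshift : ∀ q, ‖w q‖ₑ ≠ 0 → Set.MapsTo (· - q)
      {r | ‖k + dualVec d₁ d₂ r‖ < ρ} {r | ‖k + dualVec d₁ d₂ r‖ < ρ + R₀} := by
    intro q hq r hr
    have hpq : ‖dualVec d₁ d₂ q‖ < R₀ := lt_of_not_ge fun h => hq (by simp [hw q h])
    calc ‖k + dualVec d₁ d₂ (r - q)‖ = ‖(k + dualVec d₁ d₂ r) - dualVec d₁ d₂ q‖ := by
          rw [dualVec_sub, add_sub_assoc]
      _ ≤ ‖k + dualVec d₁ d₂ r‖ + ‖dualVec d₁ d₂ q‖ := norm_sub_le _ _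
      _ < ρ + R₀ := add_lt_add hr hpq
  calc lowModeMass d₁ d₂ k C ρ
      ≤ ∑' r : {r : ℤ × ℤ // ‖k + dualVec d₁ d₂ r‖ < ρ},
          ENNReal.ofReal (2 / ‖k‖ ^ 2) * ∑' q, ‖w q‖ₑ * ‖C (r - q)‖ₑ :=
        ENNReal.tsum_le_tsum fun r => enorm_le_of_recursion hk hlam hrec (r.2.le.trans hρ)
    _ ≤ ENNReal.ofReal (2 / ‖k‖ ^ 2) * ((∑' q, ‖w q‖ₑ) * lowModeMass d₁ d₂ k C (ρ + R₀)) := by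
        rw [ENNReal.tsum_mul_left]
        exact mul_le_mul_right (ENNReal.tsum_subtype_tsum_mul_sub_le (c := fun r => ‖C r‖ₑ) hshift) _
    _ = _ := (mul_assoc _ _ _).symm

end LowModes

lemma pow_div_sq_mul_le {K a : ℝ} (hK : 1 ≤ K) (ha : 0 ≤ a) (j : ℕ) :
    (2 / K ^ 2 * a) ^ j * 2 ≤ 2 * (2 * a) ^ j / K ^ j := by
  have hdiv : (2 * a) ^ j / K ^ j / K ^ j ≤ (2 * a) ^ j / K ^ j :=
    div_le_self (by positivity) (one_le_pow₀ hK)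
  rw [div_mul_eq_mul_div, div_pow, ← pow_mul, pow_mul', sq, ← div_div, mul_div_assoc]
  linarith

theorem stmt_7_general (j : ℕ) (W₀ : ℝ) :
    ∃ c : ℝ, ∀ d₁ d₂ : ℝ, 0 < d₁ → 0 < d₂ →
    ∀ R₀ : ℝ, 0 < R₀ →
    ∀ w : ℤ × ℤ → ℂ, (∀ q : ℤ × ℤ, R₀ ≤ ‖dualVec d₁ d₂ q‖ → w q = 0) →
      Summable (fun q : ℤ × ℤ => ‖w q‖) → (∑' q : ℤ × ℤ, ‖w q‖) ≤ W₀ →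
    ∀ k : EuclideanSpace ℝ (Fin 2), max 2 (4 * (j : ℝ) * R₀) ≤ ‖k‖ →
    ∀ lam : ℝ, |lam - ‖k‖ ^ 2| ≤ 1 →
    ∀ C : ℤ × ℤ → ℂ, Summable (fun r : ℤ × ℤ => ‖C r‖) → (∑' r : ℤ × ℤ, ‖C r‖) ≤ 2 →
      (∀ r : ℤ × ℤ,
        ((lam - ‖k + dualVec d₁ d₂ r‖ ^ 2 : ℝ) : ℂ) * C r = ∑' q : ℤ × ℤ, w q * C (r - q)) →
      (∑' r : {r : ℤ × ℤ // ‖k + dualVec d₁ d₂ r‖ < ‖k‖ / 4}, ‖C r.1‖) ≤ c / ‖k‖ ^ j := by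
  refine ⟨2 * (2 * W₀) ^ j, ?_⟩
  intro d₁ d₂ _ _ R₀ hR₀ w hw hwsum hwW k hk lam hlam C hCsum hC2 hrec
  have hk2 : 2 ≤ ‖k‖ := (le_max_left _ _).trans hk
  have hjR : ‖k‖ / 4 + j * R₀ ≤ ‖k‖ / 2 + R₀ := by linarith [(le_max_right _ _).trans hk]
  have hW₀ : 0 ≤ W₀ := (tsum_nonneg fun _ => norm_nonneg _).trans hwW
  have hwE : ∑' q, ‖w q‖ₑ ≤ ENNReal.ofReal W₀ := by
    simpa only [ENNReal.ofReal_tsum_of_nonneg (fun _ => norm_nonneg _) hwsum, ofReal_norm]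
      using ENNReal.ofReal_le_ofReal hwW
  have hCE : ∀ ρ, lowModeMass d₁ d₂ k C ρ ≤ ENNReal.ofReal 2 := fun ρ =>
    (lowModeMass_le_tsum ρ).trans <| by
      simpa only [ENNReal.ofReal_tsum_of_nonneg (fun _ => norm_nonneg _) hCsum, ofReal_norm]
        using ENNReal.ofReal_le_ofReal hC2
  have hmass := le_pow_mul_of_le_mul_shift
    (a := ENNReal.ofReal (2 / ‖k‖ ^ 2) * ENNReal.ofReal W₀) hR₀.le hCE
    (fun ρ hρ => (lowModeMass_le_mul hw hk2 hlam hrec hρ).trans (by gcongr)) j _ hjR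
  rw [← ofReal_tsum_norm_eq_lowModeMass hCsum, ← ENNReal.ofReal_mul (by positivity),
    ← ENNReal.ofReal_pow (by positivity), ← ENNReal.ofReal_mul (by positivity),
    ENNReal.ofReal_le_ofReal_iff (by positivity)] at hmass
  exact hmass.trans (pow_div_sq_mul_le (by linarith) hW₀ j)

/-- If `w_q = 0` for `|p_q| ≥ R₀`, `Σ_q |w_q| ≤ W₀`, `|k| ≥ max(2, 4jR₀)`, `|λ − |k|²| ≤ 1`,
`Σ_r |C_r| ≤ 2` and the recursion `(λ − |k+p_r|²) C_r = Σ_q w_q C_{r−q}` holds, then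
`Σ_{r : |k+p_r| < |k|/4} |C_r| ≤ c(j, W₀) |k|^{−j}` with a constant depending only
on `j` and `W₀`. -/
theorem stmt_7 (j : ℕ) (W₀ : ℝ) (hW₀ : 0 < W₀) :
    ∃ c : ℝ, ∀ d₁ d₂ : ℝ, 0 < d₁ → 0 < d₂ →
    ∀ R₀ : ℝ, 0 < R₀ →
    ∀ w : ℤ × ℤ → ℂ, (∀ q : ℤ × ℤ, R₀ ≤ ‖dualVec d₁ d₂ q‖ → w q = 0) →
      Summable (fun q : ℤ × ℤ => ‖w q‖) → (∑' q : ℤ × ℤ, ‖w q‖) ≤ W₀ →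
    ∀ k : EuclideanSpace ℝ (Fin 2), max 2 (4 * (j : ℝ) * R₀) ≤ ‖k‖ →
    ∀ lam : ℝ, |lam - ‖k‖ ^ 2| ≤ 1 →
    ∀ C : ℤ × ℤ → ℂ, Summable (fun r : ℤ × ℤ => ‖C r‖) → (∑' r : ℤ × ℤ, ‖C r‖) ≤ 2 →
      (∀ r : ℤ × ℤ,
        ((lam - ‖k + dualVec d₁ d₂ r‖ ^ 2 : ℝ) : ℂ) * C r = ∑' q : ℤ × ℤ, w q * C (r - q)) →
      (∑' r : {r : ℤ × ℤ // ‖k + dualVec d₁ d₂ r‖ < ‖k‖ / 4}, ‖C r.1‖) ≤ c / ‖k‖ ^ j :=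
  stmt_7_general j W₀
end

section
/- Let h ∈ C_c²(ℝ²) (twice continuously differentiable with compact support), λ : ℝ² → ℝ twice continuously differentiable, and t ∈ ℝ. Define w(x) = (1/2π) ∫_{ℝ²} h(k) e^{i(⟨k,x⟩ − tλ(k))} dk. Then for every x ∈ ℝ²: |x|² · w(x) = (1/2π) ∫_{ℝ²} e^{i(⟨k,x⟩ − tλ(k))} ( t² |∇λ(k)|² h(k) − Δh(k) + 2it ⟨∇λ(k), ∇h(k)⟩ + it (Δλ(k)) h(k) ) dk. -/
/-! Write the phase as `e^{i⟨k,x⟩} e^{-itλ(k)}` and put `g = h e^{-itλ} ∈ C_c²`. Since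
`∂_v e^{i⟨k,x⟩} = i⟨v,x⟩ e^{i⟨k,x⟩}`, integrating by parts twice along each vector of an
orthonormal basis gives `|x|² ∫ g e^{i⟨k,x⟩} = -∫ (Δg) e^{i⟨k,x⟩}`, and by the product and chain
rules `-Δg = e^{-itλ} (t²|∇λ|² h - Δh + 2it⟨∇λ, ∇h⟩ + it (Δλ) h)`. -/

open MeasureTheory

/-- Pointwise Laplacian of a complex-valued function on `ℝ²`. -/
noncomputable def lapC (f : EuclideanSpace ℝ (Fin 2) → ℂ)
    (x : EuclideanSpace ℝ (Fin 2)) : ℂ :=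
  ∑ i : Fin 2,
    fderiv ℝ (fun y => fderiv ℝ f y (EuclideanSpace.single i 1)) x (EuclideanSpace.single i 1)

/-- Pointwise Laplacian of a real-valued function on `ℝ²`. -/
noncomputable def lapR (f : EuclideanSpace ℝ (Fin 2) → ℝ)
    (x : EuclideanSpace ℝ (Fin 2)) : ℝ :=
  ∑ i : Fin 2,
    fderiv ℝ (fun y => fderiv ℝ f y (EuclideanSpace.single i 1)) x (EuclideanSpace.single i 1)

open Complex
open scoped RealInnerProductSpace

section PointwiseDerivatives

variable {E : Type*} [NormedAddCommGroup E] [NormedSpace ℝ E]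

lemma fderiv_const_mul_ofReal_apply {f : E → ℝ} {y : E} (hf : DifferentiableAt ℝ f y) (c : ℂ)
    (v : E) : fderiv ℝ (fun z => c * (f z : ℂ)) y v = c * fderiv ℝ f y v := by
  rw [((ofRealCLM.hasFDerivAt.comp y hf.hasFDerivAt).const_mul c).fderiv
    (f := fun z => c * (f z : ℂ))]
  simp

lemma fderiv_fderiv_const_mul_ofReal_apply {f : E → ℝ} (hf : ContDiff ℝ 2 f) (c : ℂ) (k v : E) :
    fderiv ℝ (fun y => fderiv ℝ (fun z => c * (f z : ℂ)) y v) k v =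
      c * fderiv ℝ (fun y => fderiv ℝ f y v) k v := by
  have hf' : ContDiff ℝ 1 (fun y => fderiv ℝ f y v) :=
    (hf.fderiv_right le_rfl).clm_apply contDiff_const
  simp_rw [fderiv_const_mul_ofReal_apply ((hf.differentiable two_ne_zero) _)]
  exact fderiv_const_mul_ofReal_apply (hf'.differentiable one_ne_zero k) c v

lemma fderiv_mul_cexp_apply {h φ : E → ℂ} {y : E} (hh : DifferentiableAt ℝ h y)
    (hφ : DifferentiableAt ℝ φ y) (v : E) :
    fderiv ℝ (fun z => h z * cexp (φ z)) y v =
      (fderiv ℝ h y v + h y * fderiv ℝ φ y v) * cexp (φ y) := by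
  rw [(hh.hasFDerivAt.mul hφ.hasFDerivAt.cexp).fderiv (f := fun z => h z * cexp (φ z))]
  simp only [add_apply, smul_apply, smul_eq_mul]
  ring

lemma fderiv_fderiv_mul_cexp_apply {h φ : E → ℂ} (hh : ContDiff ℝ 2 h) (hφ : ContDiff ℝ 2 φ)
    (k v : E) :
    fderiv ℝ (fun y => fderiv ℝ (fun z => h z * cexp (φ z)) y v) k v =
      (fderiv ℝ (fun y => fderiv ℝ h y v) k v + 2 * fderiv ℝ h k v * fderiv ℝ φ k v +
        h k * fderiv ℝ (fun y => fderiv ℝ φ y v) k v + h k * fderiv ℝ φ k v ^ 2) *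
        cexp (φ k) := by
  have hh' : ContDiff ℝ 1 (fun y => fderiv ℝ h y v) :=
    (hh.fderiv_right le_rfl).clm_apply contDiff_const
  have hφ' : ContDiff ℝ 1 (fun y => fderiv ℝ φ y v) :=
    (hφ.fderiv_right le_rfl).clm_apply contDiff_const
  have dh := hh.differentiable two_ne_zero
  have dφ := hφ.differentiable two_ne_zero
  have dh' := hh'.differentiable one_ne_zero
  have dφ' := hφ'.differentiable one_ne_zero
  simp_rw [fderiv_mul_cexp_apply (dh _) (dφ _)]
  rw [fderiv_mul_cexp_apply (h := fun y => fderiv ℝ h y v + h y * fderiv ℝ φ y v)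
      ((dh' k).add ((dh k).mul (dφ' k))) (dφ k),
    fderiv_fun_add (dh' k) (g := fun y => h y * fderiv ℝ φ y v) ((dh k).mul (dφ' k)),
    fderiv_fun_mul (dh k) (dφ' k)]
  simp only [add_apply, smul_apply, smul_eq_mul]
  ring

end PointwiseDerivatives

section IntegrationByParts

variable {E : Type*} [NormedAddCommGroup E] [InnerProductSpace ℝ E]

lemma differentiable_I_mul_inner (x : E) : Differentiable ℝ fun k : E => I * (⟪k, x⟫ : ℂ) :=
  (ofRealCLM.differentiable.comp (differentiable_id.inner ℝ (differentiable_const x))).const_mul I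

lemma fderiv_cexp_I_inner_apply (x k v : E) :
    fderiv ℝ (fun k => cexp (I * ⟪k, x⟫)) k v = I * ⟪v, x⟫ * cexp (I * ⟪k, x⟫) := by
  have hinner : fderiv ℝ (fun k : E => ⟪k, x⟫) k v = ⟪v, x⟫ := by
    simpa using fderiv_inner_apply ℝ differentiableAt_id (differentiableAt_const x) v
  rw [(differentiable_I_mul_inner x k).hasFDerivAt.cexp.fderiv,
    smul_apply, smul_eq_mul, fderiv_const_mul_ofReal_apply (f := fun k : E => ⟪k, x⟫)
      (differentiableAt_id.inner ℝ (differentiableAt_const x)), hinner, mul_comm]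

variable [FiniteDimensional ℝ E] [MeasurableSpace E] [BorelSpace E] {μ : Measure E}
  [μ.IsAddHaarMeasure]

lemma integral_fderiv_mul_cexp_I_inner {F : E → ℂ} (hF : ContDiff ℝ 1 F)
    (hFs : HasCompactSupport F) (x v : E) :
    ∫ k, fderiv ℝ F k v * cexp (I * ⟪k, x⟫) ∂μ =
      -(I * ⟪v, x⟫) * ∫ k, F k * cexp (I * ⟪k, x⟫) ∂μ := by
  have hdiff : Differentiable ℝ fun k : E => cexp (I * ⟪k, x⟫) :=
    (differentiable_I_mul_inner x).cexp
  have hcont := hdiff.continuous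
  have hFe : Integrable (fun k => F k * cexp (I * ⟪k, x⟫)) μ :=
    (hF.continuous.mul hcont).integrable_of_hasCompactSupport hFs.mul_right
  have hF'e : Integrable (fun k => fderiv ℝ F k v * cexp (I * ⟪k, x⟫)) μ :=
    (((hF.continuous_fderiv one_ne_zero).clm_apply continuous_const).mul hcont
      ).integrable_of_hasCompactSupport (hFs.fderiv_apply ℝ v).mul_right
  have hFe' : Integrable (fun k => F k * fderiv ℝ (fun k => cexp (I * ⟪k, x⟫)) k v) μ := by
    simpa only [fderiv_cexp_I_inner_apply, mul_left_comm] using hFe.const_mul (I * ⟪v, x⟫)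
  have ibp := integral_mul_fderiv_eq_neg_fderiv_mul_of_integrable hF'e hFe' hFe
    (fun k _ => hF.differentiable one_ne_zero k) fun k _ => hdiff k
  simp only [fderiv_cexp_I_inner_apply, mul_left_comm _ (I * _), integral_const_mul] at ibp
  linear_combination ibp

lemma integral_fderiv_fderiv_mul_cexp_I_inner {F : E → ℂ} (hF : ContDiff ℝ 2 F)
    (hFs : HasCompactSupport F) (x v : E) :
    ∫ k, fderiv ℝ (fun y => fderiv ℝ F y v) k v * cexp (I * ⟪k, x⟫) ∂μ =
      -(⟪v, x⟫ : ℂ) ^ 2 * ∫ k, F k * cexp (I * ⟪k, x⟫) ∂μ := by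
  rw [integral_fderiv_mul_cexp_I_inner ((hF.fderiv_right le_rfl).clm_apply contDiff_const)
      (hFs.fderiv_apply ℝ v), integral_fderiv_mul_cexp_I_inner (hF.of_le one_le_two) hFs]
  linear_combination (⟪v, x⟫ : ℂ) ^ 2 * (∫ k, F k * cexp (I * ⟪k, x⟫) ∂μ) * I_sq

lemma norm_sq_mul_integral_mul_cexp_I_inner {ι : Type*} [Fintype ι] (b : OrthonormalBasis ι ℝ E)
    {g : E → ℂ} (hg : ContDiff ℝ 2 g) (hgs : HasCompactSupport g) (x : E) :
    ((‖x‖ ^ 2 : ℝ) : ℂ) * ∫ k, g k * cexp (I * ⟪k, x⟫) ∂μ =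
      ∫ k, (-∑ i, fderiv ℝ (fun y => fderiv ℝ g y (b i)) k (b i)) * cexp (I * ⟪k, x⟫) ∂μ := by
  have hint : ∀ i, Integrable
      (fun k => fderiv ℝ (fun y => fderiv ℝ g y (b i)) k (b i) * cexp (I * ⟪k, x⟫)) μ := by
    intro i
    have hg' : ContDiff ℝ 1 fun y => fderiv ℝ g y (b i) :=
      (hg.fderiv_right le_rfl).clm_apply contDiff_const
    exact (((hg'.continuous_fderiv one_ne_zero).clm_apply continuous_const).mul
      (differentiable_I_mul_inner x).cexp.continuous).integrable_of_hasCompactSupport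
      ((hgs.fderiv_apply ℝ (b i)).fderiv_apply ℝ (b i)).mul_right
  simp only [neg_mul, Finset.sum_mul, integral_neg, integral_finsetSum _ (fun i _ => hint i),
    integral_fderiv_fderiv_mul_cexp_I_inner hg hgs, ← b.sum_sq_inner_right x]
  push_cast
  simp [Finset.sum_mul]

end IntegrationByParts

lemma OrthonormalBasis.norm_gradient_sq {ι E : Type*} [Fintype ι] [NormedAddCommGroup E]
    [InnerProductSpace ℝ E] [CompleteSpace E] (b : OrthonormalBasis ι ℝ E) (f : E → ℝ) (k : E) :
    ‖gradient f k‖ ^ 2 = ∑ i, fderiv ℝ f k (b i) ^ 2 := by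
  rw [gradient, LinearIsometryEquiv.norm_map, b.norm_dual]

lemma neg_lapC_mul_cexp_neg_I_mul {h : EuclideanSpace ℝ (Fin 2) → ℂ} (hh : ContDiff ℝ 2 h)
    {lam : EuclideanSpace ℝ (Fin 2) → ℝ} (hlam : ContDiff ℝ 2 lam) (t : ℝ)
    (k : EuclideanSpace ℝ (Fin 2)) :
    -lapC (fun z => h z * cexp (-(I * t) * lam z)) k =
      cexp (-(I * t) * lam k) *
        ((t ^ 2 * ‖gradient lam k‖ ^ 2 : ℝ) * h k - lapC h k +
          2 * I * t * (∑ ℓ : Fin 2, (fderiv ℝ lam k (EuclideanSpace.single ℓ 1) : ℂ) *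
            fderiv ℝ h k (EuclideanSpace.single ℓ 1)) + I * t * (lapR lam k : ℂ) * h k) := by
  have hφ : ContDiff ℝ 2 fun z => -(I * t) * (lam z : ℂ) :=
    contDiff_const.mul (ofRealCLM.contDiff.comp hlam)
  simp only [lapC, lapR, fderiv_fderiv_mul_cexp_apply hh hφ,
    fderiv_const_mul_ofReal_apply (hlam.differentiable two_ne_zero k),
    fderiv_fderiv_const_mul_ofReal_apply hlam,
    (EuclideanSpace.basisFun (Fin 2) ℝ).norm_gradient_sq, EuclideanSpace.basisFun_apply,
    Fin.sum_univ_two]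
  push_cast
  ring_nf
  rw [I_sq]
  ring

/-- Double integration by parts for wave packets: if `h ∈ C_c²(ℝ²)`, `λ : ℝ² → ℝ` is `C²`,
and `w(x) = (1/2π) ∫ h(k) e^{i(⟨k,x⟩ − tλ(k))} dk`, then
`|x|² w(x) = (1/2π) ∫ e^{i(⟨k,x⟩ − tλ(k))} (t²|∇λ|² h − Δh + 2it⟨∇λ, ∇h⟩ + it(Δλ) h) dk`. -/
theorem stmt_15 (h : EuclideanSpace ℝ (Fin 2) → ℂ)
    (hh : ContDiff ℝ 2 h) (hsupp : HasCompactSupport h)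
    (lam : EuclideanSpace ℝ (Fin 2) → ℝ) (hlam : ContDiff ℝ 2 lam)
    (t : ℝ) (x : EuclideanSpace ℝ (Fin 2)) :
    ((‖x‖ ^ 2 : ℝ) : ℂ) * ((1 / (2 * Real.pi) : ℂ) *
        ∫ k : EuclideanSpace ℝ (Fin 2),
          h k * Complex.exp (Complex.I * (((inner ℝ k x : ℝ) - t * lam k : ℝ) : ℂ)))
    = (1 / (2 * Real.pi) : ℂ) *
        ∫ k : EuclideanSpace ℝ (Fin 2),
          Complex.exp (Complex.I * (((inner ℝ k x : ℝ) - t * lam k : ℝ) : ℂ)) *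
            (((t ^ 2 * ‖gradient lam k‖ ^ 2 : ℝ) : ℂ) * h k - lapC h k +
              2 * Complex.I * (t : ℂ) *
                (∑ ℓ : Fin 2, ((fderiv ℝ lam k (EuclideanSpace.single ℓ 1) : ℝ) : ℂ) *
                  fderiv ℝ h k (EuclideanSpace.single ℓ 1)) +
              Complex.I * (t : ℂ) * ((lapR lam k : ℝ) : ℂ) * h k) := by
  have hφ : ContDiff ℝ 2 fun z => -(I * t) * (lam z : ℂ) :=
    contDiff_const.mul (ofRealCLM.contDiff.comp hlam)
  have hsplit : ∀ k, cexp (I * ((⟪k, x⟫ - t * lam k : ℝ) : ℂ)) =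
      cexp (-(I * t) * lam k) * cexp (I * ⟪k, x⟫) := fun k => by
    rw [← Complex.exp_add]
    congr 1
    push_cast
    ring
  simp_rw [hsplit, ← mul_assoc (h _)]
  rw [mul_left_comm, norm_sq_mul_integral_mul_cexp_I_inner (EuclideanSpace.basisFun (Fin 2) ℝ)
    (hh.mul hφ.cexp) hsupp.mul_right x]
  congr 1
  refine integral_congr_ae (.of_forall fun k => ?_)
  dsimp only
  rw [mul_right_comm (cexp _), ← neg_lapC_mul_cexp_neg_I_mul hh hlam]
  simp only [lapC, EuclideanSpace.basisFun_apply]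
end
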